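/- Fix integers 1 ≤ d ≤ d' and a real s ≥ d. Let K ⊆ ℝ^d be compact, let φ : K → ℝ^{d'} be bi-Lipschitz with some constant L ≥ 1, and set A = φ(K); assume H_d(A) > 0. Then there exists a constant C > 0 such that for every N ≥ 2 and every N-point configuration {y_1,…,y_N} ⊆ A attaining the minimal s-energy ℰ_s(A,N), one has min_{i≠j} |y_i − y_j| ≥ C · N^{−1/d} if s > d, and min_{i≠j} |y_i − y_j| ≥ C · (N log N)^{−1/d} if s = d. -/

import Mathlib

/-!
If `x` belongs to an optimal configuration `ω ⊆ A`, moving `x` to any other point of `A` cannot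
lower the energy, so `|x - y|^{-s}` is at most the potential `∑_{w ∈ ω, w ≠ x} |z - w|^{-s}` at
every `z ∈ A`. The bi-Lipschitz image `A` is upper `d`-regular, `H_d(A ∩ B(z, t)) ≤ C t^d`, so the
balls of radius `r ≍ N^{-1/d}` around the points of `ω` carry at most half of `H_d(A)`. Averaging
the potential over the rest of `A` and splitting each kernel into the dyadic shells
`2^k r ≤ |z - w| < 2^{k+1} r` gives `|x - y|^{-s} ≲ r^{-s} ∑_k 2^{(d-s)k}`, the sum running up to
the diameter of `A`. For `s > d` the geometric series is bounded; for `s = d` each of the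
`O(log N)` shells contributes equally, which costs the factor `log N`.
-/

open scoped ENNReal NNReal BigOperators Classical
open MeasureTheory Filter Metric Set Topology

/-- The Riesz `s`-energy of a finite configuration `ω`, valued in `[0,∞]`. -/
noncomputable def rieszEnergy {E : Type*} [PseudoEMetricSpace E] (s : ℝ) (ω : Finset E) : ℝ≥0∞ :=
  ∑ x ∈ ω, ∑ y ∈ ω, if x = y then 0 else edist x y ^ (-s)

/-- The `N`-point minimal Riesz `s`-energy over a set `A` (infimum over all `N`-point
subsets of `A`; `∞` if there is none). -/
noncomputable def minRieszEnergy {E : Type*} [PseudoEMetricSpace E] (s : ℝ) (A : Set E)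
    (N : ℕ) : ℝ≥0∞ :=
  ⨅ (ω : Finset E) (_ : ↑ω ⊆ A) (_ : ω.card = N), rieszEnergy s ω

/-- `A ⊆ ℝ^{d'}` is a `d`-rectifiable manifold: a finite union of images of compact subsets
of `ℝ^d` under maps that are bi-Lipschitz on open neighborhoods of those compact sets. -/
def IsRectifiableManifold (d d' : ℕ) (A : Set (EuclideanSpace ℝ (Fin d'))) : Prop :=
  ∃ (n : ℕ) (K : Fin n → Set (EuclideanSpace ℝ (Fin d)))
    (φ : Fin n → EuclideanSpace ℝ (Fin d) → EuclideanSpace ℝ (Fin d')),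
    (∀ k, IsCompact (K k)) ∧
    (∀ k, ∃ (G : Set (EuclideanSpace ℝ (Fin d))) (L : ℝ), IsOpen G ∧ K k ⊆ G ∧ 1 ≤ L ∧
      ∀ x ∈ G, ∀ y ∈ G,
        (1 / L) * dist x y ≤ dist (φ k x) (φ k y) ∧ dist (φ k x) (φ k y) ≤ L * dist x y) ∧
    A = ⋃ k, φ k '' K k

/-- The unit cube `[0,1]^d` in `ℝ^d`. -/
def unitCube (d : ℕ) : Set (EuclideanSpace ℝ (Fin d)) := {x | ∀ i, x i ∈ Set.Icc (0 : ℝ) 1}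

/-- `d`-dimensional Hausdorff measure on `ℝ^{d'}`, normalized so that the unit cube of `ℝ^d`
has measure `1`. -/
noncomputable def normHausdorff (d d' : ℕ) : Measure (EuclideanSpace ℝ (Fin d')) :=
  (μH[(d : ℝ)] (unitCube d))⁻¹ • μH[(d : ℝ)]

noncomputable def rieszPotential {E : Type*} [PseudoEMetricSpace E] (s : ℝ) (t : Finset E)
    (z : E) : ℝ≥0∞ :=
  ∑ w ∈ t, edist z w ^ (-s)

section RieszEnergy

variable {E : Type*} {s : ℝ}

lemma rieszEnergy_insert [PseudoEMetricSpace E] {t : Finset E} {p : E} (hp : p ∉ t) :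
    rieszEnergy s (insert p t) = rieszEnergy s t + 2 * rieszPotential s t p := by
  have hne : ∀ w ∈ t, p ≠ w := fun w hw h => hp (h ▸ hw)
  simp only [rieszEnergy, rieszPotential, Finset.sum_insert hp, if_true, zero_add,
    Finset.sum_add_distrib]
  rw [Finset.sum_congr rfl fun y hy => if_neg (hne y hy),
    Finset.sum_congr rfl fun x hx => if_neg (hne x hx).symm]
  simp_rw [edist_comm _ p]
  ring

lemma minRieszEnergy_le_rieszEnergy [PseudoEMetricSpace E] {A : Set E} {ω : Finset E}
    (hωA : ↑ω ⊆ A) : minRieszEnergy s A ω.card ≤ rieszEnergy s ω :=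
  iInf₂_le_of_le ω hωA (iInf_le _ rfl)

variable [EMetricSpace E]

lemma rieszEnergy_ne_top (hs : 0 < s) (ω : Finset E) : rieszEnergy s ω ≠ ∞ := by
  refine ENNReal.sum_ne_top.2 fun x _ => ENNReal.sum_ne_top.2 fun y _ => ?_
  split_ifs with h
  · exact ENNReal.zero_ne_top
  · simp [ENNReal.rpow_eq_top_iff, h, hs.le]

lemma rieszPotential_eq_top_of_mem (hs : 0 < s) {t : Finset E} {z : E} (hz : z ∈ t) :
    rieszPotential s t z = ∞ := by
  refine top_unique ((Finset.single_le_sum (fun w _ => zero_le) hz).trans' ?_)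
  rw [edist_self, ENNReal.zero_rpow_of_neg (neg_neg_iff_pos.2 hs)]

lemma edist_rpow_neg_le_rieszPotential {t : Finset E} {y : E} (hy : y ∈ t) (z : E) :
    edist z y ^ (-s) ≤ rieszPotential s t z :=
  Finset.single_le_sum (f := fun w => edist z w ^ (-s)) (fun _ _ => zero_le) hy

lemma rieszPotential_le_of_minimal (hs : 0 < s) {A : Set E} {ω : Finset E} (hωA : ↑ω ⊆ A)
    (hopt : rieszEnergy s ω = minRieszEnergy s A ω.card) {x z : E} (hx : x ∈ ω) (hz : z ∈ A) :
    rieszPotential s (ω.erase x) x ≤ rieszPotential s (ω.erase x) z := by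
  by_cases hzω : z ∈ ω.erase x
  · rw [rieszPotential_eq_top_of_mem hs hzω]
    exact le_top
  have hcompetitor : ↑(insert z (ω.erase x)) ⊆ A := by
    rw [Finset.coe_insert]
    exact Set.insert_subset hz ((Finset.coe_subset.2 (ω.erase_subset x)).trans hωA)
  have hcard : (insert z (ω.erase x)).card = ω.card := by
    rw [Finset.card_insert_of_notMem hzω, Finset.card_erase_add_one hx]
  have hle := minRieszEnergy_le_rieszEnergy (s := s) hcompetitor
  rw [hcard, ← hopt, ← Finset.insert_erase hx, rieszEnergy_insert (ω.notMem_erase x),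
    Finset.insert_erase hx, rieszEnergy_insert hzω] at hle
  exact (ENNReal.mul_le_mul_iff_right two_ne_zero ENNReal.ofNat_ne_top).1
    ((ENNReal.add_le_add_iff_left (rieszEnergy_ne_top hs _)).1 hle)

end RieszEnergy

lemma ENNReal.rpow_neg_le_rpow_neg {x y : ℝ≥0∞} {s : ℝ} (hs : 0 ≤ s) (h : x ≤ y) :
    y ^ (-s) ≤ x ^ (-s) := by
  rw [ENNReal.rpow_neg, ENNReal.rpow_neg]
  exact ENNReal.inv_le_inv.2 (ENNReal.rpow_le_rpow h hs)

lemma ENNReal.exists_le_two_pow_mul {a r : ℝ≥0∞} (ha : a ≠ ∞) (hr0 : r ≠ 0) (hr : r ≠ ∞) :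
    ∃ n : ℕ, a ≤ 2 ^ n * r := by
  obtain ⟨n, hn⟩ := ENNReal.exists_nat_gt (ENNReal.div_ne_top ha hr0)
  refine ⟨n, ?_⟩
  calc a = a / r * r := (ENNReal.div_mul_cancel hr0 hr).symm
    _ ≤ 2 ^ n * r := by
      gcongr
      exact hn.le.trans (mod_cast (Nat.lt_two_pow_self).le)

lemma ENNReal.two_pow_mul_rpow_neg_mul (C : ℝ≥0∞) {r : ℝ≥0∞} (hr : r ≠ ∞) (δ s : ℝ) (k : ℕ) :
    (2 ^ k * r) ^ (-s) * (C * (2 ^ (k + 1) * r) ^ δ)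
      = C * r ^ δ * (2 ^ δ * (2 ^ (δ - s)) ^ k * r ^ (-s)) := by
  have h2k : (2 : ℝ≥0∞) ^ k ≠ ∞ := ENNReal.pow_ne_top ENNReal.ofNat_ne_top
  have hpow : ((2 : ℝ≥0∞) ^ k) ^ (-s) * ((2 : ℝ≥0∞) ^ k) ^ δ = (2 ^ (δ - s)) ^ k := by
    rw [← ENNReal.rpow_add _ _ (pow_ne_zero k two_ne_zero) h2k, ← ENNReal.rpow_natCast,
      ← ENNReal.rpow_mul, ← ENNReal.rpow_natCast, ← ENNReal.rpow_mul, neg_add_eq_sub, mul_comm]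
  rw [pow_succ, mul_comm _ (2 : ℝ≥0∞), mul_assoc, ENNReal.mul_rpow_of_ne_top h2k hr,
    ENNReal.mul_rpow_of_ne_top ENNReal.ofNat_ne_top (ENNReal.mul_ne_top h2k hr),
    ENNReal.mul_rpow_of_ne_top h2k hr, ← hpow]
  ring

lemma ENNReal.exists_mul_rpow_le {C m : ℝ≥0∞} (hC : C ≠ ∞) (hm : m ≠ 0) {δ : ℝ} (hδ : 0 < δ) :
    ∃ ρ : ℝ≥0∞, ρ ≠ 0 ∧ ρ ≠ ∞ ∧ C * ρ ^ δ ≤ m := by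
  refine ⟨min 1 ((m / C) ^ δ⁻¹), ?_, ?_, ?_⟩
  · exact (lt_min one_pos (ENNReal.rpow_pos_of_nonneg (ENNReal.div_pos hm hC)
      (inv_nonneg.2 hδ.le))).ne'
  · exact ne_top_of_le_ne_top ENNReal.one_ne_top (min_le_left _ _)
  · calc C * min 1 ((m / C) ^ δ⁻¹) ^ δ ≤ C * ((m / C) ^ δ⁻¹) ^ δ := by
          gcongr
          exact min_le_right _ _
      _ ≤ m := by rw [ENNReal.rpow_inv_rpow hδ.ne']; exact ENNReal.mul_div_le

lemma ENNReal.natCast_mul_mul_rpow_radius (C : ℝ≥0∞) {ρ : ℝ≥0∞} (hρ : ρ ≠ ∞) {δ : ℝ}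
    (hδ : δ ≠ 0) {N : ℕ} (hN : N ≠ 0) :
    N * (C * (ρ * (N : ℝ≥0∞) ^ (-(1 / δ))) ^ δ) = C * ρ ^ δ := by
  have hN0 : (N : ℝ≥0∞) ≠ 0 := Nat.cast_ne_zero.2 hN
  have hNtop : (N : ℝ≥0∞) ^ (-(1 / δ)) ≠ ∞ := by
    simp [ENNReal.rpow_eq_top_iff, hN0]
  rw [ENNReal.mul_rpow_of_ne_top hρ hNtop, ← ENNReal.rpow_mul,
    show -(1 / δ) * δ = -1 by field_simp, ENNReal.rpow_neg_one]
  calc (N : ℝ≥0∞) * (C * (ρ ^ δ * (N : ℝ≥0∞)⁻¹))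
      = C * ρ ^ δ * ((N : ℝ≥0∞) * (N : ℝ≥0∞)⁻¹) := by ring
    _ = C * ρ ^ δ := by rw [ENNReal.mul_inv_cancel hN0 (ENNReal.natCast_ne_top N), mul_one]

lemma ENNReal.one_le_two_pow_mul_natCast_rpow_neg (δ : ℝ) {N : ℕ} (hN : N ≠ 0) :
    1 ≤ 2 ^ (⌈1 / δ⌉₊ * (Nat.log 2 N + 1)) * (N : ℝ≥0∞) ^ (-(1 / δ)) := by
  have hN1 : 1 ≤ (N : ℝ≥0∞) := mod_cast Nat.one_le_iff_ne_zero.2 hN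
  calc 1 = (N : ℝ≥0∞) ^ (1 / δ) * (N : ℝ≥0∞) ^ (-(1 / δ)) := by
        rw [← ENNReal.rpow_add _ _ (by positivity) (ENNReal.natCast_ne_top N), add_neg_cancel,
          ENNReal.rpow_zero]
    _ ≤ (N : ℝ≥0∞) ^ (⌈1 / δ⌉₊ : ℝ) * (N : ℝ≥0∞) ^ (-(1 / δ)) := by
        gcongr
        exact Nat.le_ceil _
    _ ≤ (2 ^ (Nat.log 2 N + 1)) ^ ⌈1 / δ⌉₊ * (N : ℝ≥0∞) ^ (-(1 / δ)) := by
        rw [ENNReal.rpow_natCast]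
        gcongr
        exact_mod_cast (Nat.lt_pow_succ_log_self (by norm_num : 1 < 2) N).le
    _ = 2 ^ (⌈1 / δ⌉₊ * (Nat.log 2 N + 1)) * (N : ℝ≥0∞) ^ (-(1 / δ)) := by
        rw [← pow_mul, mul_comm (Nat.log 2 N + 1)]

lemma natCast_add_mul_natLog_succ_le_mul_log (M j : ℕ) {N : ℕ} (hN : 2 ≤ N) :
    ((M + j * (Nat.log 2 N + 1) + 1 : ℕ) : ℝ) ≤ (M + 1 + 2 * j) / Real.log 2 * Real.log N := by
  have hlogb : 1 ≤ Real.logb 2 N := by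
    rw [Real.le_logb_iff_rpow_le one_lt_two (by positivity), Real.rpow_one]
    exact_mod_cast hN
  have hlog : (Nat.log 2 N : ℝ) ≤ Real.logb 2 N := by exact_mod_cast Real.natLog_le_logb N 2
  rw [div_mul_eq_mul_div, mul_div_assoc, Real.log_div_log]
  push_cast
  nlinarith

lemma le_dist_of_edist_rpow_neg_le {X : Type*} [PseudoMetricSpace X] {x y : X} {s : ℝ}
    (hs : 0 < s) {B r : ℝ≥0∞} (hB : B ≠ ∞) (hr : r ≠ 0) (h : edist x y ^ (-s) ≤ B * r ^ (-s)) :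
    (B ^ (-(1 / s))).toReal * r.toReal ≤ dist x y := by
  have hinv : ∀ a : ℝ≥0∞, (a ^ (-s)) ^ (-(1 / s)) = a := fun a => by
    rw [← ENNReal.rpow_mul, show -s * -(1 / s) = 1 by field_simp, ENNReal.rpow_one]
  have hrs : r ^ (-s) ≠ ∞ := by simp [ENNReal.rpow_eq_top_iff, hr, hs.le]
  have key : B ^ (-(1 / s)) * r ≤ edist x y := by
    calc B ^ (-(1 / s)) * r = (B * r ^ (-s)) ^ (-(1 / s)) := by
          rw [ENNReal.mul_rpow_of_ne_top hB hrs, hinv]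
      _ ≤ (edist x y ^ (-s)) ^ (-(1 / s)) := ENNReal.rpow_neg_le_rpow_neg (by positivity) h
      _ = edist x y := hinv _
  rw [dist_edist, ← ENNReal.toReal_mul]
  exact ENNReal.toReal_mono (edist_ne_top x y) key

def IsUpperRegular {X : Type*} [PseudoEMetricSpace X] [MeasurableSpace X] (μ : Measure X)
    (A : Set X) (C : ℝ≥0∞) (δ : ℝ) : Prop :=
  ∀ z t, t ≠ ∞ → μ (A ∩ closedEBall z t) ≤ C * t ^ δ

section UpperRegular

variable {X : Type*} [EMetricSpace X] [MeasurableSpace X] {μ : Measure X} {A : Set X}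
  {C : ℝ≥0∞} {δ s : ℝ}

lemma IsUpperRegular.measure_ne_top (hreg : IsUpperRegular μ A C δ) (hC : C ≠ ∞) (hδ : 0 ≤ δ)
    (hA : ediam A ≠ ∞) : μ A ≠ ∞ := by
  rcases A.eq_empty_or_nonempty with rfl | ⟨z, hz⟩
  · simp
  have hball : A ⊆ A ∩ closedEBall z (ediam A) := fun w hw => ⟨hw, edist_le_ediam_of_mem hw hz⟩
  exact ne_top_of_le_ne_top (ENNReal.mul_ne_top hC (ENNReal.rpow_ne_top_of_nonneg hδ hA))
    ((measure_mono hball).trans (hreg z _ hA))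

lemma setLIntegral_diff_eball_edist_rpow_neg_le (hs : 0 ≤ s) (S : Set X) (c : X) (ρ : ℝ≥0∞) :
    ∫⁻ z in S \ eball c ρ, edist z c ^ (-s) ∂μ ≤ ρ ^ (-s) * μ S := by
  calc ∫⁻ z in S \ eball c ρ, edist z c ^ (-s) ∂μ ≤ ∫⁻ _ in S \ eball c ρ, ρ ^ (-s) ∂μ := by
        refine setLIntegral_mono measurable_const fun z hz => ?_
        exact ENNReal.rpow_neg_le_rpow_neg hs (not_lt.1 hz.2)
    _ ≤ ρ ^ (-s) * μ S := by
        rw [setLIntegral_const]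
        exact mul_le_mul_right (measure_mono sdiff_subset) _

lemma IsUpperRegular.setLIntegral_annulus_le (hreg : IsUpperRegular μ A C δ) (hs : 0 ≤ s)
    (c : X) {r : ℝ≥0∞} (hr : r ≠ ∞) :
    ∀ n : ℕ, ∫⁻ z in A ∩ (eball c (2 ^ n * r) \ eball c r), edist z c ^ (-s) ∂μ ≤
      ∑ k ∈ Finset.range n, (2 ^ k * r) ^ (-s) * (C * (2 ^ (k + 1) * r) ^ δ)
  | 0 => by simp
  | n + 1 => by
    have hsplit : A ∩ (eball c (2 ^ (n + 1) * r) \ eball c r) ⊆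
        A ∩ (eball c (2 ^ n * r) \ eball c r) ∪
          (A ∩ closedEBall c (2 ^ (n + 1) * r)) \ eball c (2 ^ n * r) := by
      rintro z ⟨hzA, hz, hzr⟩
      by_cases hzn : z ∈ eball c (2 ^ n * r)
      · exact Or.inl ⟨hzA, hzn, hzr⟩
      · exact Or.inr ⟨⟨hzA, eball_subset_closedEBall hz⟩, hzn⟩
    calc _ ≤ _ := lintegral_mono_set hsplit
      _ ≤ _ := lintegral_union_le _ _ _
      _ ≤ _ := add_le_add (hreg.setLIntegral_annulus_le hs c hr n)
          ((setLIntegral_diff_eball_edist_rpow_neg_le hs _ c _).trans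
            (mul_le_mul_right (hreg c _ (ENNReal.mul_ne_top (by simp) hr)) _))
      _ = _ := (Finset.sum_range_succ _ n).symm

lemma IsUpperRegular.setLIntegral_diff_eball_le (hreg : IsUpperRegular μ A C δ) (hs : 0 ≤ s)
    {c : X} {r : ℝ≥0∞} (hr0 : r ≠ 0) (hr : r ≠ ∞) {n : ℕ} (hAc : A ⊆ closedEBall c (2 ^ n * r)) :
    ∫⁻ z in A \ eball c r, edist z c ^ (-s) ∂μ ≤
      C * r ^ δ * (2 ^ δ * (∑ k ∈ Finset.range (n + 1), (2 ^ (δ - s)) ^ k) * r ^ (-s)) := by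
  have hsub : A \ eball c r ⊆ A ∩ (eball c (2 ^ (n + 1) * r) \ eball c r) := by
    refine fun z hz => ⟨hz.1, mem_eball.2 (lt_of_le_of_lt (hAc hz.1) ?_), hz.2⟩
    rw [pow_succ, mul_comm _ (2 : ℝ≥0∞), mul_assoc, two_mul]
    exact ENNReal.lt_add_right (ENNReal.mul_ne_top (by simp) hr) (mul_ne_zero (by simp) hr0)
  refine (lintegral_mono_set hsub).trans ((hreg.setLIntegral_annulus_le hs c hr _).trans_eq ?_)
  simp only [ENNReal.two_pow_mul_rpow_neg_mul C hr, Finset.mul_sum, Finset.sum_mul]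

lemma IsUpperRegular.half_measure_le_measure_diff_biUnion_eball (hreg : IsUpperRegular μ A C δ)
    (hA : μ A ≠ ∞) (t : Finset X) {r : ℝ≥0∞} (hr : r ≠ ∞) (htr : t.card * (C * r ^ δ) ≤ μ A / 2) :
    μ A / 2 ≤ μ (A \ ⋃ w ∈ t, eball w r) := by
  have hcover : μ (A ∩ ⋃ w ∈ t, eball w r) ≤ μ A / 2 := calc
    _ = μ (⋃ w ∈ t, A ∩ eball w r) := by rw [inter_iUnion₂]
    _ ≤ ∑ w ∈ t, μ (A ∩ eball w r) := measure_biUnion_finset_le _ _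
    _ ≤ ∑ _w ∈ t, C * r ^ δ := Finset.sum_le_sum fun w _ =>
        (measure_mono (inter_subset_inter_right _ eball_subset_closedEBall)).trans (hreg w r hr)
    _ = t.card * (C * r ^ δ) := by rw [Finset.sum_const, nsmul_eq_mul]
    _ ≤ μ A / 2 := htr
  refine (ENNReal.add_le_add_iff_left (ENNReal.div_ne_top hA two_ne_zero)).1 ?_
  calc μ A / 2 + μ A / 2 = μ A := ENNReal.add_halves _
    _ ≤ μ (A ∩ ⋃ w ∈ t, eball w r) + μ (A \ ⋃ w ∈ t, eball w r) :=
        measure_le_inter_add_sdiff μ A _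
    _ ≤ μ A / 2 + μ (A \ ⋃ w ∈ t, eball w r) := by gcongr

lemma mul_measure_le_sum_setLIntegral [OpensMeasurableSpace X] {S : Set X} {t : Finset X}
    {P : ℝ≥0∞} (hP : ∀ z ∈ S, P ≤ rieszPotential s t z) :
    P * μ S ≤ ∑ w ∈ t, ∫⁻ z in S, edist z w ^ (-s) ∂μ := by
  have hmeas : ∀ w : X, Measurable fun z => edist z w ^ (-s) := by fun_prop
  rw [← setLIntegral_const, ← lintegral_finsetSum _ fun w _ => hmeas w]
  exact setLIntegral_mono (Finset.measurable_sum _ fun w _ => hmeas w) hP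

theorem IsUpperRegular.edist_rpow_neg_le_of_minimal [OpensMeasurableSpace X]
    (hreg : IsUpperRegular μ A C δ) (hs : 0 < s) (hA0 : μ A ≠ 0) (hA : μ A ≠ ∞)
    {ω : Finset X} (hωA : ↑ω ⊆ A) (hopt : rieszEnergy s ω = minRieszEnergy s A ω.card)
    {r : ℝ≥0∞} (hr0 : r ≠ 0) (hr : r ≠ ∞) (hωr : ω.card * (C * r ^ δ) ≤ μ A / 2)
    {n : ℕ} (hn : ediam A ≤ 2 ^ n * r) {x y : X} (hx : x ∈ ω) (hy : y ∈ ω) (hxy : x ≠ y) :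
    edist x y ^ (-s) ≤ 2 ^ δ * (∑ k ∈ Finset.range (n + 1), (2 ^ (δ - s)) ^ k) * r ^ (-s) := by
  set t := ω.erase x
  set U := ⋃ w ∈ t, eball w r
  set B := 2 ^ δ * (∑ k ∈ Finset.range (n + 1), ((2 : ℝ≥0∞) ^ (δ - s)) ^ k) * r ^ (-s)
  have htω : (t.card : ℝ≥0∞) * (C * r ^ δ) ≤ μ A / 2 :=
    (mul_le_mul_left (mod_cast Finset.card_erase_le) _).trans hωr
  have hAU : μ A / 2 ≤ μ (A \ U) := hreg.half_measure_le_measure_diff_biUnion_eball hA t hr htω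
  have hpot : ∀ z ∈ A \ U, edist x y ^ (-s) ≤ rieszPotential s t z := fun z hz =>
    (edist_rpow_neg_le_rieszPotential (Finset.mem_erase.2 ⟨hxy.symm, hy⟩) x).trans
      (rieszPotential_le_of_minimal hs hωA hopt hx hz.1)
  have hshell : ∀ w ∈ t, ∫⁻ z in A \ U, edist z w ^ (-s) ∂μ ≤ C * r ^ δ * B := fun w hw =>
    (lintegral_mono_set (sdiff_subset_sdiff_right (subset_biUnion_of_mem hw))).trans
      (hreg.setLIntegral_diff_eball_le hs.le hr0 hr fun z hz =>
        (edist_le_ediam_of_mem hz (hωA (Finset.mem_of_mem_erase hw))).trans hn)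
  refine (ENNReal.mul_le_mul_iff_right (by simpa using hA0)
    (ENNReal.div_ne_top hA two_ne_zero)).1 ?_
  calc μ A / 2 * edist x y ^ (-s) ≤ edist x y ^ (-s) * μ (A \ U) := by
        rw [mul_comm]
        gcongr
    _ ≤ ∑ w ∈ t, ∫⁻ z in A \ U, edist z w ^ (-s) ∂μ := mul_measure_le_sum_setLIntegral hpot
    _ ≤ ∑ _w ∈ t, C * r ^ δ * B := Finset.sum_le_sum hshell
    _ = t.card * (C * r ^ δ) * B := by rw [Finset.sum_const, nsmul_eq_mul, ← mul_assoc]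
    _ ≤ μ A / 2 * B := by gcongr

end UpperRegular

section Separation

variable {X : Type*} [MetricSpace X] [MeasurableSpace X] [OpensMeasurableSpace X]
  {μ : Measure X} {A : Set X} {C : ℝ≥0∞} {δ s : ℝ}

theorem IsUpperRegular.le_dist_of_minimal (hreg : IsUpperRegular μ A C δ) (hδ : δ ≠ 0)
    (hs : 0 < s) (hA0 : μ A ≠ 0) (hA : μ A ≠ ∞) {ρ : ℝ≥0∞} (hρ0 : ρ ≠ 0) (hρtop : ρ ≠ ∞)
    (hρ : C * ρ ^ δ ≤ μ A / 2) {ω : Finset X} (hωA : ↑ω ⊆ A)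
    (hopt : rieszEnergy s ω = minRieszEnergy s A ω.card) {n : ℕ}
    (hn : ediam A ≤ 2 ^ n * (ρ * (ω.card : ℝ≥0∞) ^ (-(1 / δ)))) {B : ℝ≥0∞}
    (hB : 2 ^ δ * ∑ k ∈ Finset.range (n + 1), ((2 : ℝ≥0∞) ^ (δ - s)) ^ k ≤ B) (hBtop : B ≠ ∞)
    {x y : X} (hx : x ∈ ω) (hy : y ∈ ω) (hxy : x ≠ y) :
    (B ^ (-(1 / s))).toReal * ρ.toReal * (ω.card : ℝ) ^ (-(1 / δ)) ≤ dist x y := by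
  have hN : ω.card ≠ 0 := Finset.card_ne_zero_of_mem hx
  -- the `ω.card` balls of this radius carry at most half of `μ A`
  set r := ρ * (ω.card : ℝ≥0∞) ^ (-(1 / δ))
  have hr0 : r ≠ 0 := mul_ne_zero hρ0 (by simp [ENNReal.rpow_eq_zero_iff, hN])
  have hrtop : r ≠ ∞ := ENNReal.mul_ne_top hρtop (by simp [ENNReal.rpow_eq_top_iff, hN])
  have hcore := hreg.edist_rpow_neg_le_of_minimal hs hA0 hA hωA hopt hr0 hrtop
    ((ENNReal.natCast_mul_mul_rpow_radius C hρtop hδ hN).trans_le hρ) hn hx hy hxy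
  have hsep := le_dist_of_edist_rpow_neg_le hs hBtop hr0 (hcore.trans (by gcongr))
  rwa [ENNReal.toReal_mul, ← ENNReal.toReal_rpow (ω.card : ℝ≥0∞), ENNReal.toReal_natCast,
    ← mul_assoc] at hsep

theorem IsUpperRegular.exists_separation_of_lt (hreg : IsUpperRegular μ A C δ) (hC : C ≠ ∞)
    (hδ : 0 < δ) (hδs : δ < s) (hA0 : μ A ≠ 0) (hA : Bornology.IsBounded A) :
    ∃ c : ℝ, 0 < c ∧ ∀ ω : Finset X, ↑ω ⊆ A → rieszEnergy s ω = minRieszEnergy s A ω.card →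
      ∀ x ∈ ω, ∀ y ∈ ω, x ≠ y → c * (ω.card : ℝ) ^ (-(1 / δ)) ≤ dist x y := by
  have hs : 0 < s := hδ.trans hδs
  obtain ⟨ρ, hρ0, hρtop, hρ⟩ :=
    ENNReal.exists_mul_rpow_le hC (by simpa using hA0 : μ A / 2 ≠ 0) hδ
  set B : ℝ≥0∞ := 2 ^ δ * (1 - 2 ^ (δ - s))⁻¹
  have hBtop : B ≠ ∞ := by
    refine ENNReal.mul_ne_top (by simp [ENNReal.rpow_eq_top_iff]) (ENNReal.inv_ne_top.2 ?_)
    refine (tsub_pos_of_lt ?_).ne'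
    simpa using ENNReal.rpow_lt_rpow_of_exponent_lt (x := 2) (by norm_num) (by simp)
      (sub_neg.2 hδs)
  have hB0 : B ≠ 0 := mul_ne_zero (by simp [ENNReal.rpow_eq_zero_iff])
    (ENNReal.inv_ne_zero.2 (ne_top_of_le_ne_top ENNReal.one_ne_top tsub_le_self))
  refine ⟨(B ^ (-(1 / s))).toReal * ρ.toReal, mul_pos (ENNReal.toReal_pos ?_ ?_)
    (ENNReal.toReal_pos hρ0 hρtop), fun ω hωA hopt x hx y hy hxy => ?_⟩
  · simp [ENNReal.rpow_eq_zero_iff, hBtop, hs.le]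
  · simp [ENNReal.rpow_eq_top_iff, hB0, hs.le]
  have hN : ω.card ≠ 0 := Finset.card_ne_zero_of_mem hx
  obtain ⟨n, hn⟩ := ENNReal.exists_le_two_pow_mul (r := ρ * (ω.card : ℝ≥0∞) ^ (-(1 / δ)))
    hA.ediam_ne_top (mul_ne_zero hρ0 (by simp [ENNReal.rpow_eq_zero_iff, hN]))
    (ENNReal.mul_ne_top hρtop (by simp [ENNReal.rpow_eq_top_iff, hN]))
  refine hreg.le_dist_of_minimal hδ.ne' hs hA0 (hreg.measure_ne_top hC hδ.le hA.ediam_ne_top)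
    hρ0 hρtop hρ hωA hopt hn
    (mul_le_mul_right ((ENNReal.sum_le_tsum _).trans (ENNReal.tsum_geometric _).le) _)
    hBtop hx hy hxy

theorem IsUpperRegular.exists_separation_of_eq (hreg : IsUpperRegular μ A C δ) (hC : C ≠ ∞)
    (hδ : 0 < δ) (hA0 : μ A ≠ 0) (hA : Bornology.IsBounded A) :
    ∃ c : ℝ, 0 < c ∧ ∀ ω : Finset X, ↑ω ⊆ A → rieszEnergy δ ω = minRieszEnergy δ A ω.card →
      ∀ x ∈ ω, ∀ y ∈ ω, x ≠ y →
        c * ((ω.card : ℝ) * Real.log ω.card) ^ (-(1 / δ)) ≤ dist x y := by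
  obtain ⟨ρ, hρ0, hρtop, hρ⟩ :=
    ENNReal.exists_mul_rpow_le hC (by simpa using hA0 : μ A / 2 ≠ 0) hδ
  obtain ⟨M, hM⟩ := ENNReal.exists_le_two_pow_mul hA.ediam_ne_top hρ0 hρtop
  set j := ⌈1 / δ⌉₊
  set c₀ : ℝ := (M + 1 + 2 * j) / Real.log 2
  have hc₀ : 0 < c₀ := div_pos (by positivity) (Real.log_pos one_lt_two)
  refine ⟨(2 ^ δ * c₀) ^ (-(1 / δ)) * ρ.toReal,
    mul_pos (by positivity) (ENNReal.toReal_pos hρ0 hρtop), fun ω hωA hopt x hx y hy hxy => ?_⟩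
  set N := ω.card
  have hN : 2 ≤ N := Finset.one_lt_card.2 ⟨x, hx, y, hy, hxy⟩
  set n := M + j * (Nat.log 2 N + 1)
  have hn : ediam A ≤ 2 ^ n * (ρ * (N : ℝ≥0∞) ^ (-(1 / δ))) := calc
    ediam A ≤ 2 ^ M * ρ * 1 := by rw [mul_one]; exact hM
    _ ≤ 2 ^ M * ρ * (2 ^ (j * (Nat.log 2 N + 1)) * (N : ℝ≥0∞) ^ (-(1 / δ))) := by
        gcongr
        exact ENNReal.one_le_two_pow_mul_natCast_rpow_neg δ (by omega)
    _ = 2 ^ n * (ρ * (N : ℝ≥0∞) ^ (-(1 / δ))) := by rw [pow_add]; ring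
  have hsep := hreg.le_dist_of_minimal hδ.ne' hδ hA0
    (hreg.measure_ne_top hC hδ.le hA.ediam_ne_top) hρ0 hρtop hρ hωA hopt hn
    (B := 2 ^ δ * ((n + 1 : ℕ) : ℝ≥0∞)) (by simp) (by simp [ENNReal.mul_eq_top]) hx hy hxy
  rw [← ENNReal.toReal_rpow, ENNReal.toReal_mul, ← ENNReal.toReal_rpow, ENNReal.toReal_natCast,
    ENNReal.toReal_ofNat] at hsep
  have hlogN : 0 < Real.log N := Real.log_pos (by exact_mod_cast hN)
  calc (2 ^ δ * c₀) ^ (-(1 / δ)) * ρ.toReal * ((N : ℝ) * Real.log N) ^ (-(1 / δ))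
      = (2 ^ δ * (c₀ * Real.log N)) ^ (-(1 / δ)) * ρ.toReal * (N : ℝ) ^ (-(1 / δ)) := by
        rw [Real.mul_rpow (by positivity) hlogN.le, ← mul_assoc (2 ^ δ),
          Real.mul_rpow (by positivity) hlogN.le]
        ring
    _ ≤ ((2 : ℝ) ^ δ * (n + 1 : ℕ)) ^ (-(1 / δ)) * ρ.toReal * (N : ℝ) ^ (-(1 / δ)) := by
        gcongr ?_ * _ * _
        refine Real.rpow_le_rpow_of_nonpos (by positivity) ?_ (neg_nonpos.2 (by positivity))
        gcongr
        exact natCast_add_mul_natLog_succ_le_mul_log M j hN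
    _ ≤ dist x y := hsep

end Separation

section Euclidean

variable {E : Type*} [NormedAddCommGroup E] [NormedSpace ℝ E] [FiniteDimensional ℝ E]
  [MeasurableSpace E] [BorelSpace E]

lemma MeasureTheory.Measure.addHaar_le_ofReal_diam_pow_mul (μ : Measure E) [μ.IsAddHaarMeasure]
    {S : Set E} (hS : Bornology.IsBounded S) :
    μ S ≤ ENNReal.ofReal (diam S ^ Module.finrank ℝ E) * μ (ball 0 1) := by
  rcases S.eq_empty_or_nonempty with rfl | ⟨x, hx⟩
  · simp
  rw [← Measure.addHaar_closedBall μ x diam_nonneg]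
  exact measure_mono fun y hy => mem_closedBall.2 (dist_le_diam_of_mem hS hy hx)

theorem isUpperRegular_hausdorffMeasure_image {F : Type*} [MetricSpace F] [MeasurableSpace F]
    [BorelSpace F] {K : Set E} {φ : E → F} {L : ℝ≥0} (hlip : LipschitzOnWith L φ K)
    (hanti : ∀ x ∈ K, ∀ y ∈ K, dist x y ≤ L * dist (φ x) (φ y)) :
    ∃ C : ℝ≥0∞, C ≠ ∞ ∧
      IsUpperRegular (μH[Module.finrank ℝ E] : Measure F) (φ '' K) C (Module.finrank ℝ E) := by
  set n := Module.finrank ℝ E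
  refine ⟨(L : ℝ≥0∞) ^ n * (ENNReal.ofReal ((2 * L) ^ n) * μH[n] (ball (0 : E) 1)),
    ENNReal.mul_ne_top (by simp) (ENNReal.mul_ne_top ENNReal.ofReal_ne_top
      measure_ball_lt_top.ne), fun z t ht => ?_⟩
  set S := K ∩ φ ⁻¹' closedEBall z t
  have hdist : ∀ a ∈ S, ∀ b ∈ S, dist a b ≤ 2 * L * t.toReal := by
    intro a ha b hb
    have hφ : ∀ c ∈ S, dist (φ c) z ≤ t.toReal := fun c hc => by
      rw [dist_edist]
      exact ENNReal.toReal_mono ht hc.2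
    calc dist a b ≤ L * dist (φ a) (φ b) := hanti a ha.1 b hb.1
      _ ≤ L * (dist (φ a) z + dist (φ b) z) := by gcongr; exact dist_triangle_right _ _ _
      _ ≤ L * (t.toReal + t.toReal) := by gcongr <;> exact hφ _ ‹_›
      _ = 2 * L * t.toReal := by ring
  have hbdd : Bornology.IsBounded S := isBounded_iff.2 ⟨_, hdist⟩
  have hdiam : diam S ≤ 2 * L * t.toReal := diam_le_of_forall_dist_le (by positivity) hdist
  calc μH[n] (φ '' K ∩ closedEBall z t) = μH[n] (φ '' S) := by rw [image_inter_preimage]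
    _ ≤ (L : ℝ≥0∞) ^ (n : ℝ) * μH[n] S :=
        (hlip.mono inter_subset_left).hausdorffMeasure_image_le (Nat.cast_nonneg n)
    _ ≤ (L : ℝ≥0∞) ^ (n : ℝ) *
          (ENNReal.ofReal ((2 * L * t.toReal) ^ n) * μH[n] (ball (0 : E) 1)) := by
        gcongr
        exact (Measure.addHaar_le_ofReal_diam_pow_mul _ hbdd).trans (by gcongr)
    _ = _ := by
        rw [mul_pow, ENNReal.ofReal_mul (by positivity), ENNReal.ofReal_pow ENNReal.toReal_nonneg,
          ENNReal.ofReal_toReal ht, ENNReal.rpow_natCast, ENNReal.rpow_natCast]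
        ring

end Euclidean

theorem separation_of_optimal_config_biLipschitz_general (d d' : ℕ) (hd : 1 ≤ d)
    (s : ℝ) (hs : (d : ℝ) ≤ s)
    (K : Set (EuclideanSpace ℝ (Fin d))) (hK : IsCompact K)
    (φ : EuclideanSpace ℝ (Fin d) → EuclideanSpace ℝ (Fin d')) (L : ℝ) (hL : 1 ≤ L)
    (hbi : ∀ x ∈ K, ∀ y ∈ K,
      (1 / L) * dist x y ≤ dist (φ x) (φ y) ∧ dist (φ x) (φ y) ≤ L * dist x y)
    (hA0 : 0 < normHausdorff d d' (φ '' K)) :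
    ∃ C : ℝ, 0 < C ∧ ∀ N : ℕ, 2 ≤ N →
      ∀ ω : Finset (EuclideanSpace ℝ (Fin d')), ↑ω ⊆ φ '' K → ω.card = N →
        rieszEnergy s ω = minRieszEnergy s (φ '' K) N →
          ∀ x ∈ ω, ∀ y ∈ ω, x ≠ y →
            ((d : ℝ) < s → C * (N : ℝ) ^ (-(1 / (d : ℝ))) ≤ dist x y) ∧
            (s = (d : ℝ) → C * ((N : ℝ) * Real.log N) ^ (-(1 / (d : ℝ))) ≤ dist x y) := by
  have hL0 : 0 < L := zero_lt_one.trans_le hL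
  have hlip : LipschitzOnWith L.toNNReal φ K := lipschitzOnWith_iff_dist_le_mul.2
    fun x hx y hy => by simpa [Real.coe_toNNReal _ hL0.le] using (hbi x hx y hy).2
  have hanti : ∀ x ∈ K, ∀ y ∈ K, dist x y ≤ L.toNNReal * dist (φ x) (φ y) := fun x hx y hy => by
    rw [Real.coe_toNNReal _ hL0.le, ← div_le_iff₀' hL0, div_eq_inv_mul, ← one_div]
    exact (hbi x hx y hy).1
  obtain ⟨C, hC, hreg⟩ := isUpperRegular_hausdorffMeasure_image hlip hanti
  rw [finrank_euclideanSpace_fin] at hreg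
  have hA0' : μH[(d : ℝ)] (φ '' K) ≠ 0 := fun h => hA0.ne' (by simp [normHausdorff, h])
  have hbdd := (hK.image_of_continuousOn hlip.continuousOn).isBounded
  have hd0 : (0 : ℝ) < d := by exact_mod_cast hd
  rcases hs.lt_or_eq with hds | rfl
  · obtain ⟨c, hc, hsep⟩ := hreg.exists_separation_of_lt hC hd0 hds hA0' hbdd
    refine ⟨c, hc, fun N _ ω hωA hN hopt x hx y hy hxy => ⟨fun _ => ?_, fun h => absurd h hds.ne'⟩⟩
    subst hN
    exact hsep ω hωA hopt x hx y hy hxy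
  · obtain ⟨c, hc, hsep⟩ := hreg.exists_separation_of_eq hC hd0 hA0' hbdd
    refine ⟨c, hc, fun N _ ω hωA hN hopt x hx y hy hxy => ⟨fun h => absurd h (lt_irrefl _),
      fun _ => ?_⟩⟩
    subst hN
    exact hsep ω hωA hopt x hx y hy hxy

/-- separation of optimal `s`-energy configurations (`s ≥ d`) on a bi-Lipschitz
image `A = φ(K) ⊆ ℝ^{d'}` of a compact set `K ⊆ ℝ^d`, with `H_d(A) > 0`. -/
theorem separation_of_optimal_config_biLipschitz (d d' : ℕ) (hd : 1 ≤ d) (hdd : d ≤ d')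
    (s : ℝ) (hs : (d : ℝ) ≤ s)
    (K : Set (EuclideanSpace ℝ (Fin d))) (hK : IsCompact K)
    (φ : EuclideanSpace ℝ (Fin d) → EuclideanSpace ℝ (Fin d')) (L : ℝ) (hL : 1 ≤ L)
    (hbi : ∀ x ∈ K, ∀ y ∈ K,
      (1 / L) * dist x y ≤ dist (φ x) (φ y) ∧ dist (φ x) (φ y) ≤ L * dist x y)
    (hA0 : 0 < normHausdorff d d' (φ '' K)) :
    ∃ C : ℝ, 0 < C ∧ ∀ N : ℕ, 2 ≤ N →
      ∀ ω : Finset (EuclideanSpace ℝ (Fin d')), ↑ω ⊆ φ '' K → ω.card = N →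
        rieszEnergy s ω = minRieszEnergy s (φ '' K) N →
          ∀ x ∈ ω, ∀ y ∈ ω, x ≠ y →
            ((d : ℝ) < s → C * (N : ℝ) ^ (-(1 / (d : ℝ))) ≤ dist x y) ∧
            (s = (d : ℝ) → C * ((N : ℝ) * Real.log N) ^ (-(1 / (d : ℝ))) ≤ dist x y) :=
  separation_of_optimal_config_biLipschitz_general d d' hd s hs K hK φ L hL hbi hA0
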